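/- arXiv:1201.3294 — 3 statements merged into one kernel-verified Lean document; each statement's English description precedes it below -/
import Mathlib

section
/- Let q be an even prime power. Every codeword of the dual code of the binary code of points and lines of Q(4,q) has even weight. -/
open scoped Classical

noncomputable section

variable (F : Type*) [Field F] [Fintype F]

/-- The standard non-singular parabolic quadratic form on `F^5` defining `Q(4,q)`. -/
def Q4Form : (Fin 5 → F) → F := fun v => v 0 * v 1 + v 2 * v 3 + v 4 ^ 2

/-- Points of the parabolic quadric `Q(4,q)`: singular projective points, i.e.
one-dimensional subspaces on which the form vanishes. -/
def Q4Point := {W : Submodule F (Fin 5 → F) //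
  Module.finrank F W = 1 ∧ ∀ v ∈ W, Q4Form F v = 0}

/-- Lines of the parabolic quadric `Q(4,q)`: totally singular two-dimensional subspaces. -/
def Q4Line := {W : Submodule F (Fin 5 → F) //
  Module.finrank F W = 2 ∧ ∀ v ∈ W, Q4Form F v = 0}

/-!
Each point `⟨p⟩` of `Q(4,q)` lies on exactly `q + 1` lines. In characteristic 2 a singular
vector is determined by its first four coordinates (squaring is bijective), so the singular
vectors of `p^⊥` correspond to the kernel of a nonzero functional on `F^4` and number `q^3`;
the lines through `⟨p⟩` partition those outside `⟨p⟩` into blocks of size `q^2 - q`.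
Summing a codeword over all lines thus counts each point `q + 1` times, an odd number, so
the sum of its entries, which is its weight modulo 2, vanishes.
-/

open Finset

variable {F}

theorem sum_zmod_two_eq_card_ne_zero {α : Type*} (s : Finset α) (c : α → ZMod 2) :
    ∑ a ∈ s, c a = #{a ∈ s | c a ≠ 0} := by
  rw [← sum_filter_ne_zero, card_eq_sum_ones, Nat.cast_sum, Nat.cast_one]
  refine sum_congr rfl fun a ha => ?_
  have one_of_ne_zero : ∀ x : ZMod 2, x ≠ 0 → x = 1 := by decide
  exact one_of_ne_zero _ (mem_filter.mp ha).2

theorem even_card_ne_zero_of_sum_blocks_eq_zero {α β : Type*} [Fintype α] [Fintype β]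
    (I : α → β → Prop) (hodd : ∀ a, Odd #{b | I a b}) (c : α → ZMod 2)
    (hc : ∀ b, ∑ a with I a b, c a = 0) : Even #{a | c a ≠ 0} := by
  have hsum : ∑ a, c a = 0 := calc
    ∑ a, c a = ∑ a, ∑ b with I a b, c a := by simp [(hodd _).natCast_zmod_two]
    _ = ∑ b, ∑ a with I a b, c a := by simp only [sum_filter]; exact sum_comm
    _ = 0 := sum_eq_zero fun b _ => hc b
  rw [← ZMod.natCast_eq_zero_iff_even, ← sum_zmod_two_eq_card_ne_zero, hsum]

theorem eq_add_one_of_pow_three_sub_eq_mul {q n : ℕ} (hq : 2 ≤ q)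
    (h : q ^ 3 - q = n * (q ^ 2 - q)) : n = q + 1 := by
  have hpos : 0 < q ^ 2 - q := Nat.sub_pos_of_lt (by nlinarith)
  refine Nat.eq_of_mul_eq_mul_right hpos (h.symm.trans ?_)
  zify [Nat.le_self_pow two_ne_zero q, Nat.le_self_pow three_ne_zero q]
  ring

theorem charP_two_of_even_card (h : Even (Fintype.card F)) : CharP F 2 :=
  ringChar.of_eq (FiniteField.even_card_iff_char_two.mpr (Nat.even_iff.mp h))

section FiniteField

variable {V : Type*} [AddCommGroup V] [Module F V] [Fintype V]

theorem card_filter_mem_submodule (W : Submodule F V) :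
    #{v : V | v ∈ W} = Fintype.card F ^ Module.finrank F W := by
  rw [← Fintype.card_subtype, Module.card_eq_pow_finrank (K := F)]

theorem card_filter_apply_eq_zero_of_ne_zero {f : Module.Dual F V} (hf : f ≠ 0) :
    #{v | f v = 0} = Fintype.card F ^ (Module.finrank F V - 1) := by
  rw [← Module.Dual.finrank_ker_add_one_of_ne_zero hf, Nat.add_sub_cancel,
    ← card_filter_mem_submodule]
  rfl

end FiniteField

section Span

variable {K V : Type*} [Field K] [AddCommGroup V] [Module K V]

theorem finrank_span_pair {p v : V} (hp : p ≠ 0) (hv : v ∉ Submodule.span K {p}) :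
    Module.finrank K (Submodule.span K {p, v}) = 2 := by
  have hli : LinearIndependent K ![p, v] := (LinearIndependent.pair_iff' hp).mpr fun a h =>
    hv (Submodule.mem_span_singleton.mpr ⟨a, h⟩)
  rw [← Matrix.range_cons_cons_empty p v ![]]
  simpa using finrank_span_eq_card hli

variable [FiniteDimensional K V] {W : Submodule K V}

theorem Submodule.exists_eq_span_singleton_of_finrank_eq_one (h : Module.finrank K W = 1) :
    ∃ p ≠ 0, W = Submodule.span K {p} := by
  obtain ⟨⟨p, hpW⟩, hp, -⟩ := finrank_eq_one_iff'.mp h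
  have hp : p ≠ 0 := by simpa using hp
  refine ⟨p, hp, (Submodule.eq_of_le_of_finrank_eq
    ((Submodule.span_singleton_le_iff_mem _ _).mpr hpW) ?_).symm⟩
  rw [finrank_span_singleton hp, h]

theorem Submodule.eq_span_pair_of_finrank_eq_two (h : Module.finrank K W = 2) {p v : V}
    (hp : p ≠ 0) (hv : v ∉ Submodule.span K {p}) (hpW : p ∈ W) (hvW : v ∈ W) :
    W = Submodule.span K {p, v} := by
  refine (Submodule.eq_of_le_of_finrank_eq ?_ (by rw [finrank_span_pair hp hv, h])).symm
  rw [Submodule.span_le]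
  rintro u (rfl | rfl) <;> assumption

end Span

section Quadric

variable {K : Type*} [Field K]

def Q4Polar (K : Type*) [Field K] (u v : Fin 5 → K) : K :=
  u 0 * v 1 + u 1 * v 0 + u 2 * v 3 + u 3 * v 2 + 2 * (u 4 * v 4)

theorem Q4Form_smul_add_smul (a b : K) (u v : Fin 5 → K) :
    Q4Form K (a • u + b • v) =
      a ^ 2 * Q4Form K u + b ^ 2 * Q4Form K v + a * b * Q4Polar K u v := by
  simp only [Q4Form, Q4Polar, Pi.add_apply, Pi.smul_apply, smul_eq_mul]
  ring

theorem Q4Form_eq_zero_and_Q4Polar_eq_zero_of_mem_span {p v : Fin 5 → K}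
    (hQp : Q4Form K p = 0) (hv : v ∈ Submodule.span K {p}) :
    Q4Form K v = 0 ∧ Q4Polar K p v = 0 := by
  obtain ⟨a, rfl⟩ := Submodule.mem_span_singleton.mp hv
  simp only [Q4Form, Q4Polar, Pi.smul_apply, smul_eq_mul] at hQp ⊢
  exact ⟨by linear_combination a ^ 2 * hQp, by linear_combination 2 * a * hQp⟩

theorem Q4Polar_eq_zero_of_mem (L : Q4Line K) {u v : Fin 5 → K} (hu : u ∈ L.1)
    (hv : v ∈ L.1) : Q4Polar K u v = 0 := by
  have h := Q4Form_smul_add_smul (1 : K) 1 u v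
  rw [one_smul, one_smul, L.2.2 _ (L.1.add_mem hu hv), L.2.2 u hu, L.2.2 v hv] at h
  simpa using h.symm

theorem exists_Q4Line_mem_iff {p v : Fin 5 → K} (hp : p ≠ 0) (hQp : Q4Form K p = 0)
    (hv : v ∉ Submodule.span K {p}) :
    (∃ L : Q4Line K, p ∈ L.1 ∧ v ∈ L.1) ↔ Q4Form K v = 0 ∧ Q4Polar K p v = 0 := by
  constructor
  · rintro ⟨L, hpL, hvL⟩
    exact ⟨L.2.2 v hvL, Q4Polar_eq_zero_of_mem L hpL hvL⟩
  · rintro ⟨hQv, hB⟩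
    refine ⟨⟨Submodule.span K {p, v}, finrank_span_pair hp hv, fun u hu => ?_⟩,
      Submodule.subset_span (by simp), Submodule.subset_span (by simp)⟩
    obtain ⟨a, b, rfl⟩ := Submodule.mem_span_pair.mp hu
    simp [Q4Form_smul_add_smul, hQp, hQv, hB]

section CharTwo

variable [CharP K 2]

theorem Q4Polar_eq_dotProduct_init (p v : Fin 5 → K) :
    Q4Polar K p v = ![p 1, p 0, p 3, p 2] ⬝ᵥ Fin.init v := by
  simp [Q4Polar, dotProduct, Fin.sum_univ_four, Fin.init, CharTwo.two_eq_zero]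
  ring

variable [PerfectRing K 2]

theorem Q4Form_eq_zero_iff (v : Fin 5 → K) :
    Q4Form K v = 0 ↔ v 4 = (frobeniusEquiv K 2).symm (v 0 * v 1 + v 2 * v 3) := by
  rw [Q4Form, CharTwo.add_eq_zero, eq_comm, (frobeniusEquiv K 2).eq_symm_apply,
    frobeniusEquiv_apply, frobenius_def]

def Q4Form.zeroSetEquiv : {v : Fin 5 → K // Q4Form K v = 0} ≃ (Fin 4 → K) where
  toFun v := Fin.init v.1
  invFun w := ⟨![w 0, w 1, w 2, w 3, (frobeniusEquiv K 2).symm (w 0 * w 1 + w 2 * w 3)],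
    (Q4Form_eq_zero_iff _).mpr rfl⟩
  left_inv v := by
    ext i
    fin_cases i <;> simp [Fin.init, ← (Q4Form_eq_zero_iff _).mp v.2]
  right_inv w := by
    ext i
    fin_cases i <;> rfl

end CharTwo

end Quadric

instance : Fintype (Q4Point F) := @Fintype.ofFinite _ Subtype.finite

instance : Fintype (Q4Line F) := @Fintype.ofFinite _ Subtype.finite

section LinesThroughPoint

variable {p : Fin 5 → F}

theorem card_filter_Q4Form_eq_zero_Q4Polar_eq_zero [CharP F 2] (hp : p ≠ 0)
    (hQp : Q4Form F p = 0) :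
    #{v | Q4Form F v = 0 ∧ Q4Polar F p v = 0} = Fintype.card F ^ 3 := by
  have hu : ![p 1, p 0, p 3, p 2] ≠ 0 := by
    intro h
    have h1 : p 1 = 0 := congrFun h 0
    have h0 : p 0 = 0 := congrFun h 1
    have h3 : p 3 = 0 := congrFun h 2
    have h2 : p 2 = 0 := congrFun h 3
    have h4 : p 4 = 0 := by simpa [Q4Form, h0, h1, h2, h3] using hQp
    exact hp (by ext i; fin_cases i <;> assumption)
  calc #{v | Q4Form F v = 0 ∧ Q4Polar F p v = 0}
      = #{w | ![p 1, p 0, p 3, p 2] ⬝ᵥ w = 0} := by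
        simp only [← Fintype.card_subtype]
        refine Fintype.card_congr ((Equiv.subtypeSubtypeEquivSubtypeInter _ _).symm.trans
          (Q4Form.zeroSetEquiv.subtypeEquiv fun v => ?_))
        simp [Q4Polar_eq_dotProduct_init, Q4Form.zeroSetEquiv]
    _ = Fintype.card F ^ 3 := by
        simpa using card_filter_apply_eq_zero_of_ne_zero
          ((dotProductEquiv F (Fin 4)).map_ne_zero_iff.mpr hu)

theorem card_filter_Q4Line_mem_sdiff_span (hp : p ≠ 0) (hQp : Q4Form F p = 0) :
    #(({v | Q4Form F v = 0 ∧ Q4Polar F p v = 0} : Finset _) \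
        ({v | v ∈ Submodule.span F {p}} : Finset _)) =
      #{L : Q4Line F | p ∈ L.1} * (Fintype.card F ^ 2 - Fintype.card F) := by
  set S : Finset (Fin 5 → F) := {v | v ∈ Submodule.span F {p}}
  have hcover : ({v | Q4Form F v = 0 ∧ Q4Polar F p v = 0} : Finset _) \ S =
      ({L : Q4Line F | p ∈ L.1} : Finset _).biUnion
        fun L => ({v | v ∈ L.1} : Finset _) \ S := by
    ext v
    by_cases hv : v ∈ Submodule.span F {p}
    · simp [S, hv]
    · simp [S, hv, ← exists_Q4Line_mem_iff hp hQp hv]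
  have hdisj : (({L : Q4Line F | p ∈ L.1} : Finset _) : Set (Q4Line F)).PairwiseDisjoint
      fun L => ({v | v ∈ L.1} : Finset _) \ S := by
    intro L₁ hL₁ L₂ hL₂ hne
    refine disjoint_left.mpr fun v hv₁ hv₂ => hne (Subtype.ext ?_)
    simp only [S, mem_sdiff, mem_filter, mem_univ, true_and] at hv₁ hv₂
    simp only [coe_filter, mem_univ, true_and, Set.mem_ofPred_eq] at hL₁ hL₂
    rw [Submodule.eq_span_pair_of_finrank_eq_two L₁.2.1 hp hv₁.2 hL₁ hv₁.1,
      Submodule.eq_span_pair_of_finrank_eq_two L₂.2.1 hp hv₂.2 hL₂ hv₂.1]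
  have hblock (L : Q4Line F) (hpL : p ∈ L.1) :
      #(({v | v ∈ L.1} : Finset _) \ S) = Fintype.card F ^ 2 - Fintype.card F := by
    have hSL : S ⊆ ({v | v ∈ L.1} : Finset _) := monotone_filter_right _ fun v _ hv =>
      (Submodule.span_singleton_le_iff_mem _ _).mpr hpL hv
    rw [card_sdiff_of_subset hSL, card_filter_mem_submodule, card_filter_mem_submodule, L.2.1,
      finrank_span_singleton hp, pow_one]
  rw [hcover, card_biUnion hdisj, sum_congr rfl fun L hL => hblock L (mem_filter.mp hL).2,
    sum_const, smul_eq_mul]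

theorem card_filter_Q4Line_mem [CharP F 2] (hp : p ≠ 0) (hQp : Q4Form F p = 0) :
    #{L : Q4Line F | p ∈ L.1} = Fintype.card F + 1 := by
  have hspan : ({v | v ∈ Submodule.span F {p}} : Finset _) ⊆
      ({v | Q4Form F v = 0 ∧ Q4Polar F p v = 0} : Finset _) :=
    monotone_filter_right _ fun _ _ => Q4Form_eq_zero_and_Q4Polar_eq_zero_of_mem_span hQp
  have h := card_filter_Q4Line_mem_sdiff_span hp hQp
  rw [card_sdiff_of_subset hspan, card_filter_Q4Form_eq_zero_Q4Polar_eq_zero hp hQp,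
    card_filter_mem_submodule, finrank_span_singleton hp, pow_one] at h
  exact eq_add_one_of_pow_three_sub_eq_mul Fintype.one_lt_card h

end LinesThroughPoint

theorem card_filter_Q4Line_ge [CharP F 2] (P : Q4Point F) :
    #{L : Q4Line F | P.1 ≤ L.1} = Fintype.card F + 1 := by
  obtain ⟨p, hp, hP⟩ := Submodule.exists_eq_span_singleton_of_finrank_eq_one P.2.1
  have hpP : p ∈ P.1 := hP ▸ Submodule.mem_span_singleton_self p
  simp only [hP, Submodule.span_singleton_le_iff_mem]
  exact card_filter_Q4Line_mem hp (P.2.2 p hpP)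

variable (F)

/-- Every codeword of the dual of the binary code of points and lines of `Q(4,q)`,
`q` even, has even weight. -/
theorem dual_code_Q4_even_weight (q : ℕ) (hq : Fintype.card F = q) (hqe : Even q)
    (c : Q4Point F → ZMod 2)
    (hc : ∀ L : Q4Line F, ∑ᶠ P ∈ {P : Q4Point F | P.1 ≤ L.1}, c P = 0) :
    Even (Set.ncard {P : Q4Point F | c P ≠ 0}) := by
  have : CharP F 2 := charP_two_of_even_card (hq ▸ hqe)
  rw [Set.ncard_eq_toFinset_card', Set.toFinset_ofPred]
  refine even_card_ne_zero_of_sum_blocks_eq_zero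
    (fun (P : Q4Point F) (L : Q4Line F) => P.1 ≤ L.1) (fun P => ?_) c fun L => ?_
  · rw [card_filter_Q4Line_ge, hq]
    exact hqe.add_one
  · rw [← hc L, finsum_mem_eq_toFinset_sum, Set.toFinset_ofPred]
end
end

section
/- Let S_L be a set of at most 4(q+1) lines in PG(3,q), q >= 16, such that every plane of PG(3,q) contains 0 or at least 2 lines of S_L and every point of PG(3,q) lies on 0 or at least 2 lines of S_L. Then every point of PG(3,q) lies on at most 4 lines of S_L, or on at least q-1 lines of S_L. -/
/-!
Fix a point `P` on `x` lines of `S`. A plane through one of these lines `L` either contains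
another line through `P`, and is then spanned by the two, so at most `x - 1` planes through `L`
are of this kind; or it is private to `L`. Private planes of distinct lines are distinct, and
by the plane condition each contains a line of `S` missing `P`, which spans it together with
`P`; so distinct private planes give distinct lines of `S` not through `P`. Counting the
`q + 1` planes through each line gives `x (q + 2 - x) ≤ |S| - x ≤ 4 (q + 1) - x`, which fails
for `5 ≤ x ≤ q - 2` as soon as `q ≥ 15`.
-/

open scoped Classical

noncomputable section

variable (F : Type*) [Field F] [Fintype F]

/-- Points of `PG(3,q)`: one-dimensional subspaces of `F^4`. -/
def PGPoint := {W : Submodule F (Fin 4 → F) // Module.finrank F W = 1}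

/-- Lines of `PG(3,q)`: two-dimensional subspaces of `F^4`. -/
def PGLine := {W : Submodule F (Fin 4 → F) // Module.finrank F W = 2}

/-- Planes of `PG(3,q)`: three-dimensional subspaces of `F^4`. -/
def PGPlane := {W : Submodule F (Fin 4 → F) // Module.finrank F W = 3}

open Module Finset

theorem Set.exists_ne_of_ncard_eq_zero_or_two_le {α : Type*} {s : Set α} (hs : s.Finite)
    (h : s.ncard = 0 ∨ 2 ≤ s.ncard) {a : α} (ha : a ∈ s) : ∃ b ∈ s, b ≠ a := by
  rcases h with h | h
  · exact absurd ha (by simp [(Set.ncard_eq_zero hs).mp h])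
  · exact Set.exists_ne_of_one_lt_ncard h a

theorem le_four_or_sub_one_le_of_mul_le {q x y : ℕ} (hq : 15 ≤ q)
    (hx : x * (q + 2) ≤ y + x * x) (hy : x + y ≤ 4 * (q + 1)) : x ≤ 4 ∨ q - 1 ≤ x := by
  by_contra! h
  obtain ⟨h₁, h₂⟩ := h
  have : (0 : ℤ) ≤ ((x : ℤ) - 5) * ((q : ℤ) - x - 2) := mul_nonneg (by omega) (by omega)
  nlinarith

namespace Submodule

section DivisionRing

variable {K V : Type*} [DivisionRing K] [AddCommGroup V] [Module K V]

theorem ne_bot_of_finrank_eq_one {P : Submodule K V} (hP : finrank K P = 1) : P ≠ ⊥ := by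
  rintro rfl
  simp at hP

variable [FiniteDimensional K V]

theorem finrank_sup_eq_add_one_of_not_le {M P : Submodule K V} (hP : finrank K P = 1)
    (h : ¬P ≤ M) : finrank K ↥(M ⊔ P) = finrank K M + 1 := by
  have hlt : finrank K ↥(M ⊓ P) < finrank K P :=
    finrank_lt_finrank_of_lt (inf_le_right.lt_of_ne fun he => h (he ▸ inf_le_left))
  have := finrank_sup_add_finrank_inf_eq M P
  omega

theorem finrank_sup_eq_three_of_ne {W₁ W₂ : Submodule K V} (h₁ : finrank K W₁ = 2)
    (h₂ : finrank K W₂ = 2) (hne : W₁ ≠ W₂) (hmeet : W₁ ⊓ W₂ ≠ ⊥) :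
    finrank K ↥(W₁ ⊔ W₂) = 3 := by
  have hpos : finrank K ↥(W₁ ⊓ W₂) ≠ 0 := fun h => hmeet (finrank_eq_zero.mp h)
  have hlt : finrank K ↥(W₁ ⊓ W₂) < finrank K W₁ := by
    refine finrank_lt_finrank_of_lt (inf_le_left.lt_of_ne fun he => hne ?_)
    exact eq_of_le_of_finrank_eq (he ▸ inf_le_right) (h₁.trans h₂.symm)
  have := finrank_sup_add_finrank_inf_eq W₁ W₂
  omega

end DivisionRing

section FiniteField

variable {K V : Type*} [Field K] [Finite K] [AddCommGroup V] [Module K V] [FiniteDimensional K V]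

/-- The hyperplanes `W ⊔ U`, for `U` a point of a complement `W'` of `W`, are pairwise distinct:
the modular law recovers `U` as `(W ⊔ U) ⊓ W'`. -/
theorem card_add_one_le_card_hyperplanes_containing {W : Submodule K V} {n : ℕ}
    (hW : finrank K W = n) (hV : finrank K V = n + 2) :
    Nat.card K + 1 ≤ Nat.card {U : Submodule K V // finrank K U = n + 1 ∧ W ≤ U} := by
  obtain ⟨W', hW'⟩ := W.exists_isCompl
  have hW'2 : finrank K W' = 2 := by
    have := finrank_add_eq_of_isCompl hW'; omega
  let point : Projectivization K W' → Submodule K V := fun p => p.submodule.map W'.subtype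
  have hpoint_le (p) : point p ≤ W' := map_subtype_le _ _
  have hpoint_finrank (p) : finrank K (point p) = 1 := by
    rw [finrank_map_subtype_eq, p.finrank_submodule]
  have hpoint_not_le (p) : ¬point p ≤ W := fun h => ne_bot_of_finrank_eq_one (hpoint_finrank p)
    ((hW'.disjoint.mono_left h).eq_bot_of_le (hpoint_le p))
  let hyperplane (p : Projectivization K W') : {U : Submodule K V // finrank K U = n + 1 ∧ W ≤ U} :=
    ⟨W ⊔ point p, by rw [finrank_sup_eq_add_one_of_not_le (hpoint_finrank p) (hpoint_not_le p), hW],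
      le_sup_left⟩
  have hinj : Function.Injective hyperplane := by
    intro p p' h
    have hrecover (p) : (W ⊔ point p) ⊓ W' = point p := by
      rw [sup_comm, sup_inf_assoc_of_le _ (hpoint_le p), hW'.inf_eq_bot, sup_bot_eq]
    have := congrArg (fun U => U.1 ⊓ W') h
    simp only [hyperplane, hrecover] at this
    exact Projectivization.submodule_injective
      (map_injective_of_injective W'.injective_subtype this)
  have : Finite V := Module.finite_of_finite K
  rw [← Projectivization.card_of_finrank_two K W' hW'2]
  exact Nat.card_le_card_of_injective hyperplane hinj

end FiniteField

end Submodule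

section Geometry

variable {K : Type*} [Field K]

theorem PGPlane.subsingleton_setOf_le {A : Submodule K (Fin 4 → K)} (hA : finrank K A = 3) :
    {π : PGPlane K | A ≤ π.1}.Subsingleton := fun π₁ h₁ π₂ h₂ =>
  Subtype.ext <| (Submodule.eq_of_le_of_finrank_eq h₁ (hA.trans π₁.2.symm)).symm.trans
    (Submodule.eq_of_le_of_finrank_eq h₂ (hA.trans π₂.2.symm))

theorem PGLine.subsingleton_planes_of_ne {L₁ L₂ : PGLine K} {P : PGPoint K} (hne : L₁ ≠ L₂)
    (h₁ : P.1 ≤ L₁.1) (h₂ : P.1 ≤ L₂.1) :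
    {π : PGPlane K | L₁.1 ≤ π.1 ∧ L₂.1 ≤ π.1}.Subsingleton := by
  have hmeet : L₁.1 ⊓ L₂.1 ≠ ⊥ := fun h =>
    Submodule.ne_bot_of_finrank_eq_one P.2 (eq_bot_iff.mpr ((le_inf h₁ h₂).trans h.le))
  have hne' : L₁.1 ≠ L₂.1 := Subtype.coe_injective.ne hne
  have hdim := Submodule.finrank_sup_eq_three_of_ne L₁.2 L₂.2 hne' hmeet
  exact (PGPlane.subsingleton_setOf_le hdim).anti fun π hπ => sup_le hπ.1 hπ.2

theorem PGLine.subsingleton_planes_of_not_le {M : PGLine K} {P : PGPoint K} (h : ¬P.1 ≤ M.1) :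
    {π : PGPlane K | P.1 ≤ π.1 ∧ M.1 ≤ π.1}.Subsingleton := by
  have hdim : finrank K ↥(M.1 ⊔ P.1) = 3 := by
    rw [Submodule.finrank_sup_eq_add_one_of_not_le P.2 h, M.2]
  exact (PGPlane.subsingleton_setOf_le hdim).anti fun π hπ => sup_le hπ.2 hπ.1

end Geometry

section Counting

variable {F}

instance : Finite (PGLine F) := by unfold PGLine; infer_instance

instance : Finite (PGPlane F) := by unfold PGPlane; infer_instance

noncomputable instance : Fintype (PGLine F) := Fintype.ofFinite _

noncomputable instance : Fintype (PGPlane F) := Fintype.ofFinite _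

theorem PGLine.card_add_one_le_card_planes (L : PGLine F) :
    Fintype.card F + 1 ≤ #{π : PGPlane F | L.1 ≤ π.1} := by
  calc Fintype.card F + 1
      ≤ Nat.card {U : Submodule F (Fin 4 → F) // finrank F U = 3 ∧ L.1 ≤ U} := by
        rw [← Nat.card_eq_fintype_card]
        exact Submodule.card_add_one_le_card_hyperplanes_containing L.2 (by simp)
    _ = Nat.card {π : PGPlane F // L.1 ≤ π.1} :=
        (Nat.card_congr (Equiv.subtypeSubtypeEquivSubtypeInter _ _)).symm
    _ = #{π : PGPlane F | L.1 ≤ π.1} := by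
        rw [Nat.card_eq_fintype_card, Fintype.card_subtype]

noncomputable def privatePlanes (T : Finset (PGLine F)) (L : PGLine F) : Finset (PGPlane F) :=
  {π | L.1 ≤ π.1 ∧ ∀ M ∈ T, M.1 ≤ π.1 → M = L}

theorem card_planes_le_card_privatePlanes_add {T : Finset (PGLine F)} {P : PGPoint F}
    (hT : ∀ M ∈ T, P.1 ≤ M.1) {L : PGLine F} (hL : L ∈ T) :
    #{π : PGPlane F | L.1 ≤ π.1} ≤ #(privatePlanes T L) + (#T - 1) := by
  rw [← card_erase_of_mem hL,
    ← card_filter_add_card_filter_not (fun π : PGPlane F => ∀ M ∈ T, M.1 ≤ π.1 → M = L),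
    filter_filter]
  refine add_le_add le_rfl (card_le_card_of_forall_subsingleton (fun π M => M.1 ≤ π.1) ?_ ?_)
  · intro π hπ
    simp only [mem_filter, mem_univ, true_and, not_forall] at hπ
    obtain ⟨-, M, hM, hMπ, hML⟩ := hπ
    exact ⟨M, mem_erase.mpr ⟨hML, hM⟩, hMπ⟩
  · intro M hM
    refine (PGLine.subsingleton_planes_of_ne (ne_of_mem_erase hM).symm (hT L hL)
      (hT M (mem_of_mem_erase hM))).anti fun π hπ => ?_
    simp only [mem_filter, mem_univ, true_and] at hπ
    exact ⟨hπ.1.1, hπ.2⟩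

theorem pairwiseDisjoint_privatePlanes (T : Finset (PGLine F)) :
    (T : Set (PGLine F)).PairwiseDisjoint (privatePlanes T) := by
  intro L₁ hL₁ L₂ hL₂ hne
  refine disjoint_left.mpr fun π h₁ h₂ => hne ?_
  simp only [privatePlanes, mem_filter, mem_univ, true_and] at h₁ h₂
  exact (h₁.2 L₂ hL₂ h₂.1).symm

theorem card_biUnion_privatePlanes_le {S : Finset (PGLine F)} (P : PGPoint F)
    (hplane : ∀ π : PGPlane F, ∀ L ∈ S, L.1 ≤ π.1 → ∃ M ∈ S, M ≠ L ∧ M.1 ≤ π.1) :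
    #({L ∈ S | P.1 ≤ L.1}.biUnion (privatePlanes {L ∈ S | P.1 ≤ L.1})) ≤
      #{L ∈ S | ¬P.1 ≤ L.1} := by
  refine card_le_card_of_forall_subsingleton (fun π M => M.1 ≤ π.1) ?_ ?_
  · intro π hπ
    obtain ⟨L, hLT, hπL⟩ := mem_biUnion.mp hπ
    simp only [privatePlanes, mem_filter, mem_univ, true_and] at hπL hLT
    obtain ⟨M, hMS, hML, hMπ⟩ := hplane π L hLT.1 hπL.1
    exact ⟨M, mem_filter.mpr ⟨hMS, fun hPM => hML (hπL.2 M ⟨hMS, hPM⟩ hMπ)⟩, hMπ⟩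
  · intro M hM
    refine (PGLine.subsingleton_planes_of_not_le (mem_filter.mp hM).2).anti fun π hπ => ?_
    simp only [mem_biUnion] at hπ
    obtain ⟨⟨L, hLT, hπL⟩, hMπ⟩ := hπ
    simp only [privatePlanes, mem_filter, mem_univ, true_and] at hπL hLT
    exact ⟨hLT.2.trans hπL.1, hMπ⟩

theorem card_mul_le_of_forall_plane (S : Finset (PGLine F)) (P : PGPoint F)
    (hplane : ∀ π : PGPlane F, ∀ L ∈ S, L.1 ≤ π.1 → ∃ M ∈ S, M ≠ L ∧ M.1 ≤ π.1) :
    #{L ∈ S | P.1 ≤ L.1} * (Fintype.card F + 2) ≤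
      #{L ∈ S | ¬P.1 ≤ L.1} + #{L ∈ S | P.1 ≤ L.1} * #{L ∈ S | P.1 ≤ L.1} := by
  set T := {L ∈ S | P.1 ≤ L.1}
  have hT : ∀ M ∈ T, P.1 ≤ M.1 := fun M hM => (mem_filter.mp hM).2
  have hprivate : ∀ L ∈ T, Fintype.card F + 2 ≤ #(privatePlanes T L) + #T := fun L hL => by
    have h₁ := PGLine.card_add_one_le_card_planes L
    have h₂ := card_planes_le_card_privatePlanes_add hT hL
    have h₃ : 0 < #T := card_pos.mpr ⟨L, hL⟩
    omega
  calc #T * (Fintype.card F + 2) = ∑ L ∈ T, (Fintype.card F + 2) := by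
        rw [sum_const, smul_eq_mul]
    _ ≤ ∑ L ∈ T, (#(privatePlanes T L) + #T) := sum_le_sum hprivate
    _ = #(T.biUnion (privatePlanes T)) + #T * #T := by
        rw [sum_add_distrib, sum_const, smul_eq_mul,
          card_biUnion (pairwiseDisjoint_privatePlanes T)]
    _ ≤ #{L ∈ S | ¬P.1 ≤ L.1} + #T * #T := by
        gcongr
        exact card_biUnion_privatePlanes_le P hplane

end Counting

theorem line_set_point_degree_dichotomy (q : ℕ) (hq : Fintype.card F = q) (hq16 : 16 ≤ q)
    (S : Set (PGLine F)) (hcard : S.ncard ≤ 4 * (q + 1))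
    (hplane : ∀ π : PGPlane F,
      Set.ncard {L | L ∈ S ∧ L.1 ≤ π.1} = 0 ∨ 2 ≤ Set.ncard {L | L ∈ S ∧ L.1 ≤ π.1}) :
    ∀ P : PGPoint F,
      Set.ncard {L | L ∈ S ∧ P.1 ≤ L.1} ≤ 4 ∨
        q - 1 ≤ Set.ncard {L | L ∈ S ∧ P.1 ≤ L.1} := by
  intro P
  have hlines (p : PGLine F → Prop) : {L | L ∈ S ∧ p L}.ncard = #{L ∈ S.toFinset | p L} := by
    rw [← Set.ncard_coe_finset]
    congr
    ext
    simp
  have hplane' : ∀ π : PGPlane F, ∀ L ∈ S.toFinset, L.1 ≤ π.1 →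
      ∃ M ∈ S.toFinset, M ≠ L ∧ M.1 ≤ π.1 := by
    intro π L hL hLπ
    obtain ⟨M, ⟨hMS, hMπ⟩, hML⟩ := Set.exists_ne_of_ncard_eq_zero_or_two_le (Set.toFinite _)
      (hplane π) ⟨Set.mem_toFinset.mp hL, hLπ⟩
    exact ⟨M, Set.mem_toFinset.mpr hMS, hML, hMπ⟩
  have hS : #{L ∈ S.toFinset | P.1 ≤ L.1} + #{L ∈ S.toFinset | ¬P.1 ≤ L.1} ≤ 4 * (q + 1) := by
    rw [card_filter_add_card_filter_not, ← Set.ncard_eq_toFinset_card']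
    exact hcard
  rw [hlines]
  exact le_four_or_sub_one_le_of_mul_le (by omega) (hq ▸ card_mul_le_of_forall_plane _ P hplane') hS
end
end

section
/- Let q be a prime power and let R and S be two distinct points of PG(3,q), and pi_1, pi_2 two distinct planes containing the line RS. Let S_L be the set of the 4q lines through R or S, contained in pi_1 or pi_2, and different from the line RS; assign symbol alpha (a nonzero element of F_p) to the lines through R in pi_1 and the lines through S in pi_2, and symbol -alpha to the other lines of S_L. Then every point of PG(3,q) lies on lines of S_L whose symbols sum to zero, and every plane of PG(3,q) contains lines of S_L whose symbols sum to zero. -/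
open scoped Classical

noncomputable section

variable (F : Type*) [Field F] [Fintype F]

/-!
Put `ℓ = RS`. For a point `X` on `ℓ` and a plane `W` through `ℓ`, the lines through `X` in `W`
other than `ℓ` form a punctured pencil of `q` lines, and `S_L` is the disjoint union of the four
punctured pencils `(R, π₁)`, `(S, π₂)` (symbol `α`) and `(R, π₂)`, `(S, π₁)` (symbol `-α`).
A point `P ≠ X` lies on at most one line of the punctured pencil `(X, W)`, namely `PX`, and does
so iff `P ∈ W \ ℓ`; a plane `π ≠ W` contains at most the line `π ∩ W`, and does so iff `X ∈ π`
and `ℓ ⊄ π`. Neither count depends on how the planes `π₁, π₂` are paired with `R, S`, so every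
point and every plane sees as many lines with symbol `α` as with symbol `-α`.
-/

open Module Set

section LinearAlgebra

variable {K V : Type*} [Field K] [AddCommGroup V] [Module K V]

theorem Submodule.finrank_sup_eq_two {X Y : Submodule K V} (hX : finrank K X = 1)
    (hY : finrank K Y = 1) (hXY : X ≠ Y) : finrank K ↥(X ⊔ Y) = 2 := by
  have : FiniteDimensional K X := .of_finrank_eq_succ hX
  have : FiniteDimensional K Y := .of_finrank_eq_succ hY
  have hbot : X ⊓ Y = ⊥ := ((isAtom_iff_finrank_eq_one.2 hX).disjoint_of_ne
    (isAtom_iff_finrank_eq_one.2 hY) hXY).eq_bot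
  have := finrank_sup_add_finrank_inf_eq X Y
  rwa [hbot, finrank_bot, hX, hY] at this

theorem Submodule.finrank_inf_add_two [FiniteDimensional K V] {W₁ W₂ : Submodule K V}
    (hW₁ : finrank K W₁ + 1 = finrank K V) (hW₂ : finrank K W₂ + 1 = finrank K V)
    (hne : W₁ ≠ W₂) : finrank K ↥(W₁ ⊓ W₂) + 2 = finrank K V := by
  have hlt : W₁ < W₁ ⊔ W₂ :=
    left_lt_sup.2 fun h => hne (eq_of_le_of_finrank_eq h (by omega)).symm
  have := finrank_lt_finrank_of_lt hlt
  have := finrank_le (W₁ ⊔ W₂)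
  have := finrank_sup_add_finrank_inf_eq W₁ W₂
  omega

theorem Submodule.card_finrank_eq_one_le [Finite K] {C : Submodule K V}
    (hC : finrank K C = 2) :
    Nat.card {H : Submodule K V // H ≤ C ∧ finrank K H = 1} = Nat.card K + 1 := by
  let e : {H : Submodule K C // finrank K H = 1} ≃
      {H : Submodule K V // H ≤ C ∧ finrank K H = 1} :=
    (Equiv.subtypeEquiv C.mapIic.toEquiv fun H => by
      rw [← finrank_map_subtype_eq C H]; rfl).trans
      (Equiv.subtypeSubtypeEquivSubtypeInter (· ≤ C) fun H => finrank K H = 1)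
  rw [← Nat.card_congr e, ← Nat.card_congr (Projectivization.equivSubmodule K C),
    Projectivization.card_of_finrank_two K C hC]

/-- If `D` is a complement of `X`, then `U ↦ U ⊓ D` identifies the subspaces between `X` and `W`
with the subspaces of `D ⊓ W`, by the modular law. -/
theorem Submodule.card_finrank_eq_succ_between [Finite K] [FiniteDimensional K V] {k : ℕ}
    {X W : Submodule K V} (hXW : X ≤ W) (hX : finrank K X = k) (hW : finrank K W = k + 2) :
    Nat.card {U : Submodule K V // X ≤ U ∧ U ≤ W ∧ finrank K U = k + 1} = Nat.card K + 1 := by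
  obtain ⟨D, hD⟩ := X.exists_isCompl
  have hsup {U : Submodule K V} (hXU : X ≤ U) : X ⊔ D ⊓ U = U := by
    rw [← sup_inf_assoc_of_le D hXU, hD.sup_eq_top, top_inf_eq]
  have hinf {H : Submodule K V} (hH : H ≤ D) : D ⊓ (X ⊔ H) = H := by
    rw [inf_comm, sup_comm, sup_inf_assoc_of_le X hH, hD.inf_eq_bot, sup_bot_eq]
  have hdim {H : Submodule K V} (hH : H ≤ D) : finrank K ↥(X ⊔ H) = k + finrank K H := by
    have := finrank_sup_add_finrank_inf_eq X H
    rwa [(hD.disjoint.mono_right hH).eq_bot, finrank_bot, add_zero, hX] at this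
  have hC : finrank K ↥(D ⊓ W) = 2 := by
    have := hdim (inf_le_left : D ⊓ W ≤ D)
    rw [hsup hXW] at this
    omega
  let e : {U : Submodule K V // X ≤ U ∧ U ≤ W ∧ finrank K U = k + 1} ≃
      {H : Submodule K V // H ≤ D ⊓ W ∧ finrank K H = 1} :=
    { toFun U := ⟨D ⊓ U, inf_le_inf_left D U.2.2.1, by
        have := hdim (inf_le_left : D ⊓ U.1 ≤ D)
        rw [hsup U.2.1, U.2.2.2] at this
        omega⟩
      invFun H := ⟨X ⊔ H, le_sup_left, sup_le hXW (H.2.1.trans inf_le_right), by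
        rw [hdim (H.2.1.trans inf_le_left), H.2.2]⟩
      left_inv U := Subtype.ext (hsup U.2.1)
      right_inv H := Subtype.ext (hinf (H.2.1.trans inf_le_left)) }
  rw [Nat.card_congr e, card_finrank_eq_one_le hC]

end LinearAlgebra

theorem Set.ncard_eq_ite_of_subset_singleton {α : Type*} {s : Set α} {a : α} (h : s ⊆ {a}) :
    s.ncard = if a ∈ s then 1 else 0 := by
  rcases subset_singleton_iff_eq.1 h with rfl | rfl <;> simp

theorem finsum_mem_const_eq_ncard_smul {α M : Type*} [AddCommMonoid M] {s : Set α}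
    (hs : s.Finite) (a : M) : ∑ᶠ _ ∈ s, a = s.ncard • a := by
  rw [finsum_mem_eq_finite_toFinset_sum _ hs, Finset.sum_const, ncard_eq_toFinset_card s hs]

theorem finsum_mem_eq_ncard_smul_sub_ncard_smul {α M : Type*} [Finite α] [AddCommGroup M]
    {f : α → M} {s t : Set α} {a : M} (hst : Disjoint s t) (hs : ∀ x ∈ s, f x = a)
    (ht : ∀ x ∈ t, f x = -a) (hf : ∀ x, x ∉ s → x ∉ t → f x = 0) (u : Set α) :
    ∑ᶠ x ∈ u, f x = (u ∩ s).ncard • a - (u ∩ t).ncard • a := by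
  have hsupp : u ∩ Function.support f = (u ∩ s ∪ u ∩ t) ∩ Function.support f := by
    have hsub : Function.support f ⊆ s ∪ t := fun x hx =>
      by_contra fun h => hx (hf x (fun hs => h (.inl hs)) fun ht => h (.inr ht))
    rw [← inter_union_distrib_left, inter_assoc, inter_eq_right.2 hsub]
  rw [finsum_mem_inter_support_eq f u _ hsupp,
    finsum_mem_union (hst.mono inter_subset_right inter_subset_right) (toFinite _) (toFinite _),
    finsum_mem_congr rfl fun x hx => hs x hx.2, finsum_mem_congr rfl fun x hx => ht x hx.2,
    finsum_mem_const_eq_ncard_smul (toFinite _), finsum_mem_const_eq_ncard_smul (toFinite _),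
    smul_neg, sub_eq_add_neg]

section Incidence

variable {K : Type*} [Field K]

instance [Finite K] : Finite (PGLine K) := Subtype.finite

theorem PGLine.eq_of_le {L M : PGLine K} (h : L.1 ≤ M.1) : L = M :=
  Subtype.ext (Submodule.eq_of_le_of_finrank_eq h (L.2.trans M.2.symm))

def PGPoint.join (X Y : PGPoint K) (h : X ≠ Y) : PGLine K :=
  ⟨X.1 ⊔ Y.1, Submodule.finrank_sup_eq_two X.2 Y.2 (Subtype.val_injective.ne h)⟩

def PGPlane.meet (π π' : PGPlane K) (h : π ≠ π') : PGLine K :=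
  ⟨π.1 ⊓ π'.1, by
    have := Submodule.finrank_inf_add_two (by rw [π.2, finrank_fin_fun])
      (by rw [π'.2, finrank_fin_fun]) (Subtype.val_injective.ne h)
    rw [finrank_fin_fun] at this
    omega⟩

theorem PGPoint.join_eq_of_le {X Y : PGPoint K} (h : X ≠ Y) {L : PGLine K} (hX : X.1 ≤ L.1)
    (hY : Y.1 ≤ L.1) : X.join Y h = L :=
  PGLine.eq_of_le (sup_le hX hY)

theorem PGPlane.eq_meet_of_le {π π' : PGPlane K} (h : π ≠ π') {L : PGLine K} (hπ : L.1 ≤ π.1)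
    (hπ' : L.1 ≤ π'.1) : L = π.meet π' h :=
  PGLine.eq_of_le (le_inf hπ hπ')

def puncturedPencil (X : PGPoint K) (W : PGPlane K) (ℓ : PGLine K) : Set (PGLine K) :=
  {L | X.1 ≤ L.1 ∧ L.1 ≤ W.1 ∧ L ≠ ℓ}

theorem disjoint_puncturedPencil_of_point_ne {X Y : PGPoint K} {W W' : PGPlane K}
    {ℓ : PGLine K} (hX : X.1 ≤ ℓ.1) (hY : Y.1 ≤ ℓ.1) (h : X ≠ Y) :
    Disjoint (puncturedPencil X W ℓ) (puncturedPencil Y W' ℓ) :=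
  disjoint_left.2 fun _ ⟨hXL, _, hLℓ⟩ ⟨hYL, _, _⟩ =>
    hLℓ ((X.join_eq_of_le h hXL hYL).symm.trans (X.join_eq_of_le h hX hY))

theorem disjoint_puncturedPencil_of_plane_ne {X Y : PGPoint K} {W W' : PGPlane K}
    {ℓ : PGLine K} (hW : ℓ.1 ≤ W.1) (hW' : ℓ.1 ≤ W'.1) (h : W ≠ W') :
    Disjoint (puncturedPencil X W ℓ) (puncturedPencil Y W' ℓ) :=
  disjoint_left.2 fun _ ⟨_, hLW, hLℓ⟩ ⟨_, hLW', _⟩ =>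
    hLℓ ((PGPlane.eq_meet_of_le h hLW hLW').trans (PGPlane.eq_meet_of_le h hW hW').symm)

variable [Finite K]

theorem ncard_puncturedPencil {X : PGPoint K} {W : PGPlane K} {ℓ : PGLine K}
    (hX : X.1 ≤ ℓ.1) (hW : ℓ.1 ≤ W.1) : (puncturedPencil X W ℓ).ncard = Nat.card K := by
  have hcard : {L : PGLine K | X.1 ≤ L.1 ∧ L.1 ≤ W.1}.ncard = Nat.card K + 1 := by
    rw [← Nat.card_coe_set_eq,
      ← Submodule.card_finrank_eq_succ_between (hX.trans hW) X.2 (by rw [W.2])]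
    exact Nat.card_congr ((Equiv.subtypeSubtypeEquivSubtypeInter
      (fun U : Submodule K (Fin 4 → K) => finrank K U = 2) fun U => X.1 ≤ U ∧ U ≤ W.1).trans
      (Equiv.subtypeEquivRight fun _ => by rw [and_comm, and_assoc]))
  have hdiff : puncturedPencil X W ℓ = {L | X.1 ≤ L.1 ∧ L.1 ≤ W.1} \ {ℓ} := by
    ext L
    simp [puncturedPencil, and_assoc]
  rw [hdiff, ncard_sdiff_singleton_of_mem (show ℓ ∈ {L : PGLine K | X.1 ≤ L.1 ∧ L.1 ≤ W.1} from
    ⟨hX, hW⟩), hcard, Nat.add_sub_cancel]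

theorem ncard_star_inter_puncturedPencil {X : PGPoint K} {W : PGPlane K} {ℓ : PGLine K}
    (hX : X.1 ≤ ℓ.1) (hW : ℓ.1 ≤ W.1) (P : PGPoint K) :
    ({L | P.1 ≤ L.1} ∩ puncturedPencil X W ℓ).ncard =
      if P = X then Nat.card K else if P.1 ≤ W.1 ∧ ¬P.1 ≤ ℓ.1 then 1 else 0 := by
  by_cases hPX : P = X
  · subst hPX
    rw [if_pos rfl, inter_eq_right.2 fun L hL => hL.1, ncard_puncturedPencil hX hW]
  have hℓ : P.1 ≤ ℓ.1 ↔ P.join X hPX = ℓ :=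
    ⟨fun h => P.join_eq_of_le hPX h hX, fun h => h ▸ le_sup_left⟩
  have hmem : P.join X hPX ∈ {L | P.1 ≤ L.1} ∩ puncturedPencil X W ℓ ↔
      P.1 ≤ W.1 ∧ ¬P.1 ≤ ℓ.1 :=
    ⟨fun ⟨_, _, hJW, hJℓ⟩ => ⟨le_sup_left.trans hJW, hJℓ ∘ hℓ.1⟩,
      fun ⟨hPW, hPℓ⟩ => ⟨(le_sup_left : P.1 ≤ P.1 ⊔ X.1), le_sup_right, sup_le hPW (hX.trans hW), hPℓ ∘ hℓ.2⟩⟩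
  have hsub : {L | P.1 ≤ L.1} ∩ puncturedPencil X W ℓ ⊆ {P.join X hPX} :=
    fun L ⟨hPL, hXL, _⟩ => (P.join_eq_of_le hPX hPL hXL).symm
  rw [if_neg hPX, ncard_eq_ite_of_subset_singleton hsub]
  simp only [hmem]

theorem ncard_plane_inter_puncturedPencil {X : PGPoint K} {W : PGPlane K} {ℓ : PGLine K}
    (hX : X.1 ≤ ℓ.1) (hW : ℓ.1 ≤ W.1) (π : PGPlane K) :
    ({L | L.1 ≤ π.1} ∩ puncturedPencil X W ℓ).ncard =
      if π = W then Nat.card K else if X.1 ≤ π.1 ∧ ¬ℓ.1 ≤ π.1 then 1 else 0 := by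
  by_cases hπW : π = W
  · subst hπW
    rw [if_pos rfl, inter_eq_right.2 fun L hL => hL.2.1, ncard_puncturedPencil hX hW]
  have hℓ : ℓ.1 ≤ π.1 ↔ π.meet W hπW = ℓ :=
    ⟨fun h => (PGPlane.eq_meet_of_le hπW h hW).symm, fun h => h ▸ inf_le_left⟩
  have hmem : π.meet W hπW ∈ {L | L.1 ≤ π.1} ∩ puncturedPencil X W ℓ ↔
      X.1 ≤ π.1 ∧ ¬ℓ.1 ≤ π.1 :=
    ⟨fun ⟨_, hXm, _, hmℓ⟩ => ⟨hXm.trans inf_le_left, hmℓ ∘ hℓ.1⟩,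
      fun ⟨hXπ, hℓπ⟩ => ⟨(inf_le_left : π.1 ⊓ W.1 ≤ π.1), le_inf hXπ (hX.trans hW), inf_le_right, hℓπ ∘ hℓ.2⟩⟩
  have hsub : {L | L.1 ≤ π.1} ∩ puncturedPencil X W ℓ ⊆ {π.meet W hπW} :=
    fun L ⟨hLπ, _, hLW, _⟩ => PGPlane.eq_meet_of_le hπW hLπ hLW
  rw [if_neg hπW, ncard_eq_ite_of_subset_singleton hsub]
  simp only [hmem]

end Incidence

section Quadrangle

variable {K : Type*} [Field K] {R S : PGPoint K} {hRS : R ≠ S} {π₁ π₂ : PGPlane K}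

/-- The lines of `S_L` with symbol `α`; exchanging `π₁` and `π₂` gives those with symbol `-α`. -/
def quadrangleLines (R S : PGPoint K) (hRS : R ≠ S) (π₁ π₂ : PGPlane K) : Set (PGLine K) :=
  puncturedPencil R π₁ (R.join S hRS) ∪ puncturedPencil S π₂ (R.join S hRS)

theorem mem_quadrangleLines {L : PGLine K} :
    L ∈ quadrangleLines R S hRS π₁ π₂ ↔
      ((R.1 ≤ L.1 ∧ L.1 ≤ π₁.1) ∨ (S.1 ≤ L.1 ∧ L.1 ≤ π₂.1)) ∧ L ≠ R.join S hRS := by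
  simp only [quadrangleLines, puncturedPencil, mem_union, mem_ofPred_eq]
  tauto

theorem disjoint_quadrangleLines (h₁ : (R.join S hRS).1 ≤ π₁.1)
    (h₂ : (R.join S hRS).1 ≤ π₂.1) (hπ : π₁ ≠ π₂) :
    Disjoint (quadrangleLines R S hRS π₁ π₂) (quadrangleLines R S hRS π₂ π₁) := by
  have hR : R.1 ≤ (R.join S hRS).1 := le_sup_left
  have hS : S.1 ≤ (R.join S hRS).1 := le_sup_right
  rw [quadrangleLines, quadrangleLines, disjoint_union_left, disjoint_union_right,
    disjoint_union_right]
  exact ⟨⟨disjoint_puncturedPencil_of_plane_ne h₁ h₂ hπ,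
      disjoint_puncturedPencil_of_point_ne hR hS hRS⟩,
    ⟨disjoint_puncturedPencil_of_point_ne hS hR hRS.symm,
      disjoint_puncturedPencil_of_plane_ne h₂ h₁ hπ.symm⟩⟩

variable [Finite K]

theorem ncard_inter_quadrangleLines (T : Set (PGLine K)) :
    (T ∩ quadrangleLines R S hRS π₁ π₂).ncard =
      (T ∩ puncturedPencil R π₁ (R.join S hRS)).ncard +
        (T ∩ puncturedPencil S π₂ (R.join S hRS)).ncard := by
  rw [quadrangleLines, inter_union_distrib_left, ncard_union_eq
    ((disjoint_puncturedPencil_of_point_ne le_sup_left le_sup_right hRS).mono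
      inter_subset_right inter_subset_right)]

theorem ncard_quadrangleLines (h₁ : (R.join S hRS).1 ≤ π₁.1) (h₂ : (R.join S hRS).1 ≤ π₂.1) :
    (quadrangleLines R S hRS π₁ π₂).ncard = 2 * Nat.card K := by
  rw [← univ_inter (quadrangleLines R S hRS π₁ π₂), ncard_inter_quadrangleLines, univ_inter,
    univ_inter, ncard_puncturedPencil le_sup_left h₁, ncard_puncturedPencil le_sup_right h₂,
    two_mul]

theorem ncard_star_inter_quadrangleLines_comm (h₁ : (R.join S hRS).1 ≤ π₁.1)
    (h₂ : (R.join S hRS).1 ≤ π₂.1) (P : PGPoint K) :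
    ({L | P.1 ≤ L.1} ∩ quadrangleLines R S hRS π₁ π₂).ncard =
      ({L | P.1 ≤ L.1} ∩ quadrangleLines R S hRS π₂ π₁).ncard := by
  have hR : R.1 ≤ (R.join S hRS).1 := le_sup_left
  have hS : S.1 ≤ (R.join S hRS).1 := le_sup_right
  rw [ncard_inter_quadrangleLines, ncard_inter_quadrangleLines,
    ncard_star_inter_puncturedPencil hR h₁, ncard_star_inter_puncturedPencil hS h₂,
    ncard_star_inter_puncturedPencil hR h₂, ncard_star_inter_puncturedPencil hS h₁]
  by_cases hPR : P = R
  · subst hPR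
    simp [hRS, hR]
  by_cases hPS : P = S
  · subst hPS
    simp [hRS.symm, hS]
  rw [if_neg hPR, if_neg hPR, if_neg hPS, if_neg hPS, add_comm]

theorem ncard_plane_inter_quadrangleLines_comm (h₁ : (R.join S hRS).1 ≤ π₁.1)
    (h₂ : (R.join S hRS).1 ≤ π₂.1) (π : PGPlane K) :
    ({L | L.1 ≤ π.1} ∩ quadrangleLines R S hRS π₁ π₂).ncard =
      ({L | L.1 ≤ π.1} ∩ quadrangleLines R S hRS π₂ π₁).ncard := by
  rw [ncard_inter_quadrangleLines, ncard_inter_quadrangleLines,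
    ncard_plane_inter_puncturedPencil le_sup_left h₁,
    ncard_plane_inter_puncturedPencil le_sup_right h₂,
    ncard_plane_inter_puncturedPencil le_sup_left h₂,
    ncard_plane_inter_puncturedPencil le_sup_right h₁]
  by_cases hπ₁ : π = π₁
  · subst hπ₁
    simp only [h₁, not_true_eq_false, and_false, if_false, add_comm]
  by_cases hπ₂ : π = π₂
  · subst hπ₂
    simp only [h₂, not_true_eq_false, and_false, if_false, add_comm]
  rw [if_neg hπ₁, if_neg hπ₁, if_neg hπ₂, if_neg hπ₂, add_comm]

end Quadrangle

theorem quadrangle_configuration_codeword (p q : ℕ)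
    (hq : Fintype.card F = q)
    (R S : PGPoint F) (hRS : R ≠ S)
    (π₁ π₂ : PGPlane F) (hπ : π₁ ≠ π₂)
    (h₁ : R.1 ⊔ S.1 ≤ π₁.1) (h₂ : R.1 ⊔ S.1 ≤ π₂.1)
    (α : ZMod p)
    (SL : Set (PGLine F))
    (hSL : SL = {L : PGLine F | (R.1 ≤ L.1 ∨ S.1 ≤ L.1) ∧
      (L.1 ≤ π₁.1 ∨ L.1 ≤ π₂.1) ∧ L.1 ≠ R.1 ⊔ S.1})
    (c : PGLine F → ZMod p)
    (hc : ∀ L : PGLine F, c L =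
      if L ∈ SL then
        (if (R.1 ≤ L.1 ∧ L.1 ≤ π₁.1) ∨ (S.1 ≤ L.1 ∧ L.1 ≤ π₂.1) then α else -α)
      else 0) :
    SL.ncard = 4 * q ∧
    (∀ P : PGPoint F, ∑ᶠ L ∈ {L : PGLine F | P.1 ≤ L.1}, c L = 0) ∧
    (∀ π : PGPlane F, ∑ᶠ L ∈ {L : PGLine F | L.1 ≤ π.1}, c L = 0) := by
  have hdisj := disjoint_quadrangleLines (hRS := hRS) h₁ h₂ hπ
  have hℓ (L : PGLine F) : L ≠ R.join S hRS ↔ L.1 ≠ R.1 ⊔ S.1 :=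
    Subtype.val_injective.ne_iff.symm
  have hSL' : SL = quadrangleLines R S hRS π₁ π₂ ∪ quadrangleLines R S hRS π₂ π₁ := by
    ext L
    simp only [hSL, mem_ofPred_eq, mem_union, mem_quadrangleLines, hℓ]
    tauto
  have hsum := finsum_mem_eq_ncard_smul_sub_ncard_smul (f := c) (a := α) hdisj
    (fun L hL => by rw [hc, if_pos (hSL' ▸ .inl hL), if_pos (mem_quadrangleLines.1 hL).1])
    (fun L hL => by
      rw [hc, if_pos (hSL' ▸ .inr hL), if_neg fun h => disjoint_left.1 hdisj
        (mem_quadrangleLines.2 ⟨h, (mem_quadrangleLines.1 hL).2⟩) hL])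
    (fun L h₁₂ h₂₁ => by rw [hc, if_neg (hSL' ▸ by simp [h₁₂, h₂₁])])
  refine ⟨?_, fun P => ?_, fun π => ?_⟩
  · rw [hSL', ncard_union_eq hdisj, ncard_quadrangleLines h₁ h₂, ncard_quadrangleLines h₂ h₁,
      Nat.card_eq_fintype_card, hq]
    ring
  · rw [hsum, ncard_star_inter_quadrangleLines_comm h₁ h₂, sub_self]
  · rw [hsum, ncard_plane_inter_quadrangleLines_comm h₁ h₂, sub_self]
end
end
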